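/- Let ρ, σ, τ be non-degenerate density matrices, let s ↦ σ_s be the exponential arc connecting σ to ρ and t ↦ τ_t the exponential arc connecting τ to ρ. Then the mixed second derivative −(∂/∂s)(∂/∂t) D(σ_s||τ_t) evaluated at s = t = 0 exists and equals ∫₀¹ Tr( ρ^u c_ρ(σ) ρ^{1−u} c_ρ(τ) ) du, which also equals Tr( [c_ρ(σ)]^K_ρ · c_ρ(τ) ). -/

import Mathlib

open MeasureTheory
open scoped ComplexOrder

attribute [local instance] Matrix.frobeniusNormedAddCommGroup Matrix.frobeniusNormedSpace

variable {n : ℕ}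

/-- The matrix exponential. -/
noncomputable def mexp (A : Matrix (Fin n) (Fin n) ℂ) : Matrix (Fin n) (Fin n) ℂ :=
  NormedSpace.exp A

/-- The matrix logarithm, defined by (real) functional calculus; meaningful on
positive definite matrices. -/
noncomputable def mlog (A : Matrix (Fin n) (Fin n) ℂ) : Matrix (Fin n) (Fin n) ℂ :=
  cfc Real.log A

/-- Real powers of a matrix, defined by (real) functional calculus; meaningful on
positive definite matrices. -/
noncomputable def mpow (A : Matrix (Fin n) (Fin n) ℂ) (u : ℝ) : Matrix (Fin n) (Fin n) ℂ :=
  cfc (fun x : ℝ => x ^ u) A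

/-- Umegaki's relative entropy `D(ρ‖σ) = Tr ρ (log ρ - log σ)` (a real number). -/
noncomputable def relEnt (ρ σ : Matrix (Fin n) (Fin n) ℂ) : ℝ :=
  (Matrix.trace (ρ * (mlog ρ - mlog σ))).re

/-- The Kubo transform `[A]^K_ρ = ∫₀¹ ρ^u A ρ^(1-u) du` (entrywise Bochner integral). -/
noncomputable def kubo (ρ A : Matrix (Fin n) (Fin n) ℂ) : Matrix (Fin n) (Fin n) ℂ :=
  ∫ u in (0:ℝ)..1, mpow ρ u * A * mpow ρ (1 - u)

/-- The chart centered at `ρ`: `c_ρ(σ) = log σ - log ρ + D(ρ‖σ)·I`. -/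
noncomputable def chart (ρ σ : Matrix (Fin n) (Fin n) ℂ) : Matrix (Fin n) (Fin n) ℂ :=
  mlog σ - mlog ρ + relEnt ρ σ • (1 : Matrix (Fin n) (Fin n) ℂ)

/-- The normalization `α(t) = log Tr exp((1-t)·log ρ + t·log σ)` of the exponential arc. -/
noncomputable def alpha (ρ σ : Matrix (Fin n) (Fin n) ℂ) (t : ℝ) : ℝ :=
  Real.log (Matrix.trace (mexp ((1 - t) • mlog ρ + t • mlog σ))).re

/-- The exponential arc connecting `σ` to `ρ`:
`σ_t = exp((1-t)·log ρ + t·log σ - α(t)·I)`. -/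
noncomputable def arc (ρ σ : Matrix (Fin n) (Fin n) ℂ) (t : ℝ) : Matrix (Fin n) (Fin n) ℂ :=
  mexp ((1 - t) • mlog ρ + t • mlog σ - alpha ρ σ t • (1 : Matrix (Fin n) (Fin n) ℂ))

/-- The potential `Φ_ρ(A) = log Tr exp(log ρ + A)`. -/
noncomputable def potential (ρ A : Matrix (Fin n) (Fin n) ℂ) : ℝ :=
  Real.log (Matrix.trace (mexp (mlog ρ + A))).re

/-- The density matrix `τ_A = exp(log ρ + A) / Tr exp(log ρ + A)`. -/
noncomputable def tauOf (ρ A : Matrix (Fin n) (Fin n) ℂ) : Matrix (Fin n) (Fin n) ℂ :=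
  (Matrix.trace (mexp (mlog ρ + A)))⁻¹ • mexp (mlog ρ + A)

/-!
Put `L = log ρ`, `B = log σ - log ρ`, `C = log τ - log ρ`. The arcs are Gibbs states
`σ_s = exp (L + s B) / Z(s)` with `α = log Z`, so
`log σ_s - log τ_t = s B - t C + (α_τ(t) - α_σ(s)) I`, and as `Tr σ_s = 1` the `t`-derivative of
`D(σ_s‖τ_t)` at `0` is `α_τ'(0) - Tr σ_s C`. Duhamel's formula gives
`d/ds exp (L + s B) = [B]^K_ρ` at `s = 0`; differentiating the normalisation adds
`D(ρ‖σ) ρ = [D(ρ‖σ) I]^K_ρ`, so `σ_s` has velocity `[c_ρ(σ)]^K_ρ` at `0`. Finally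
`Tr [c_ρ(σ)]^K_ρ = Tr ρ c_ρ(σ) = 0`, so `C` may be replaced by `c_ρ(τ)`.
-/

open NormedSpace

section BanachAlgebra

variable {𝔸 : Type*} [NormedRing 𝔸] [NormedAlgebra ℝ 𝔸] [CompleteSpace 𝔸]

theorem exp_sub_exp_eq_intervalIntegral (A X : 𝔸) :
    exp X - exp A = ∫ u in (0:ℝ)..1, exp (u • X) * (X - A) * exp ((1 - u) • A) := by
  let +nondep : NormedAlgebra ℚ 𝔸 := NormedAlgebra.restrictScalars ℚ ℝ 𝔸
  have hderiv (u : ℝ) : HasDerivAt (fun v : ℝ => exp (v • X) * exp ((1 - v) • A))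
      (exp (u • X) * (X - A) * exp ((1 - u) • A)) u := by
    have hA : HasDerivAt (fun v : ℝ => exp ((1 - v) • A)) (-(A * exp ((1 - u) • A))) u :=
      (hasDerivAt_exp_smul_const' A (1 - u)).scomp u ((hasDerivAt_id u).const_sub 1)
        |>.congr_deriv (neg_one_smul ℝ _)
    refine ((hasDerivAt_exp_smul_const X u).mul hA).congr_deriv ?_
    rw [mul_sub, sub_mul, mul_neg, ← sub_eq_add_neg, mul_assoc, mul_assoc]
  rw [intervalIntegral.integral_eq_sub_of_hasDerivAt (fun u _ => hderiv u)
    (Continuous.intervalIntegrable (by fun_prop) 0 1)]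
  simp

theorem hasDerivAt_exp_add_smul (A B : 𝔸) :
    HasDerivAt (fun s : ℝ => exp (A + s • B))
      (∫ u in (0:ℝ)..1, exp (u • A) * B * exp ((1 - u) • A)) 0 := by
  let +nondep : NormedAlgebra ℚ 𝔸 := NormedAlgebra.restrictScalars ℚ ℝ 𝔸
  set J : ℝ → 𝔸 := fun s => ∫ u in (0:ℝ)..1, exp (u • (A + s • B)) * B * exp ((1 - u) • A)
  have hJ : Continuous J :=
    intervalIntegral.continuous_parametric_intervalIntegral_of_continuous' (by fun_prop) 0 1
  have hslope (s : ℝ) (hs : s ≠ 0) : slope (fun s : ℝ => exp (A + s • B)) 0 s = J s := by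
    rw [slope_def_module, zero_smul, add_zero, sub_zero, exp_sub_exp_eq_intervalIntegral A,
      add_sub_cancel_left, inv_smul_eq_iff₀ hs, ← intervalIntegral.integral_smul]
    simp only [mul_smul_comm, smul_mul_assoc]
  rw [hasDerivAt_iff_tendsto_slope]
  convert (hJ.tendsto 0).mono_left nhdsWithin_le_nhds |>.congr' ?_ using 2
  · simp [J]
  · filter_upwards [self_mem_nhdsWithin] with s hs
    exact (hslope s hs).symm

theorem exp_sub_smul_one (H : 𝔸) (r : ℝ) : exp (H - r • 1) = Real.exp (-r) • exp H := by
  let +nondep : NormedAlgebra ℚ 𝔸 := NormedAlgebra.restrictScalars ℚ ℝ 𝔸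
  rw [← Algebra.algebraMap_eq_smul_one, sub_eq_add_neg, ← map_neg,
    exp_add_of_commute (Algebra.commute_algebraMap_right _ _), ← algebraMap_exp_comm,
    ← Real.exp_eq_exp_ℝ, Algebra.algebraMap_eq_smul_one, mul_smul_one]

end BanachAlgebra

attribute [local instance] Matrix.frobeniusNormedRing Matrix.frobeniusNormedAlgebra

local notation "𝕄" => Matrix (Fin n) (Fin n) ℂ

open scoped MatrixOrder

/- Lemmas of the functional calculus stated over a `NormedRing` do not find the matrix functional
calculus through the Frobenius norm by unification, so it is passed explicitly. -/
theorem cfc_exp_eq_exp {H : 𝕄} (hH : IsSelfAdjoint H) : cfc Real.exp H = exp H :=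
  @CFC.real_exp_eq_normedSpace_exp _ _ _ _ Matrix.IsHermitian.instContinuousFunctionalCalculus _ hH

theorem mlog_exp {H : 𝕄} (hH : IsSelfAdjoint H) : mlog (exp H) = H :=
  @CFC.log_exp _ _ _ _ Matrix.IsHermitian.instContinuousFunctionalCalculus H hH

theorem exp_mlog {ρ : 𝕄} (hρ : ρ.PosDef) : exp (mlog ρ) = ρ :=
  @CFC.exp_log _ _ _ _ Matrix.IsHermitian.instContinuousFunctionalCalculus _ _ _ ρ
    hρ.isStrictlyPositive

theorem isSelfAdjoint_mlog (A : 𝕄) : IsSelfAdjoint (mlog A) := cfc_predicate _ _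

theorem trace_exp_pos [NeZero n] {H : 𝕄} (hH : IsSelfAdjoint H) : 0 < (exp H).trace := by
  have : IsStrictlyPositive (exp H) := by
    rw [← cfc_exp_eq_exp hH, cfc_isStrictlyPositive_iff Real.exp H]
    exact fun x _ => Real.exp_pos x
  exact (Matrix.isStrictlyPositive_iff_posDef.1 this).trace_pos

theorem mpow_eq_exp {ρ : 𝕄} (hρ : ρ.PosDef) (u : ℝ) : mpow ρ u = exp (u • mlog ρ) := by
  have hspec : ∀ x ∈ spectrum ℝ ρ, 0 < x :=
    (StarOrderedRing.isStrictlyPositive_iff_spectrum_pos ρ).1 hρ.isStrictlyPositive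
  have hlog : ContinuousOn Real.log (spectrum ℝ ρ) := fun x hx =>
    (Real.continuousAt_log (hspec x hx).ne').continuousWithinAt
  rw [mpow, mlog, ← cfc_smul u Real.log ρ hlog, ← cfc_exp_eq_exp (cfc_predicate _ _),
    ← cfc_comp' Real.exp (fun x => u • Real.log x) ρ (by fun_prop) (hlog.const_smul u)]
  exact cfc_congr fun x hx => by
    rw [Real.rpow_def_of_pos (hspec x hx), mul_comm]
    rfl

theorem mpow_add {ρ : 𝕄} (hρ : ρ.PosDef) (u v : ℝ) :
    mpow ρ u * mpow ρ v = mpow ρ (u + v) := by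
  rw [mpow_eq_exp hρ, mpow_eq_exp hρ, mpow_eq_exp hρ, add_smul,
    Matrix.exp_add_of_commute _ _ (((Commute.refl _).smul_left u).smul_right v)]

theorem mpow_one {ρ : 𝕄} (hρ : ρ.PosDef) : mpow ρ 1 = ρ := by
  rw [mpow_eq_exp hρ, one_smul, exp_mlog hρ]

theorem continuous_mpow {ρ : 𝕄} (hρ : ρ.PosDef) : Continuous (mpow ρ) := by
  rw [funext (mpow_eq_exp hρ)]
  fun_prop

noncomputable def reTraceMulCLM (M : 𝕄) : 𝕄 →L[ℝ] ℝ :=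
  LinearMap.toContinuousLinearMap <| Complex.reLm.comp
    (((Matrix.traceLinearMap (Fin n) ℂ ℂ).comp (LinearMap.mulRight ℂ M)).restrictScalars ℝ)

theorem HasDerivAt.re_trace_mul {f : ℝ → 𝕄} {f' : 𝕄} {x : ℝ} (hf : HasDerivAt f f' x) (M : 𝕄) :
    HasDerivAt (fun s => (f s * M).trace.re) (f' * M).trace.re x :=
  (reTraceMulCLM M).hasFDerivAt.comp_hasDerivAt x hf

theorem intervalIntegral_re_trace_mul {f : ℝ → 𝕄} (hf : Continuous f) (a b : ℝ) (M : 𝕄) :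
    ∫ u in a..b, (f u * M).trace.re = ((∫ u in a..b, f u) * M).trace.re :=
  (reTraceMulCLM M).intervalIntegral_comp_comm (hf.intervalIntegrable a b)

theorem continuous_mpow_mul_mul_mpow_one_sub {ρ : 𝕄} (hρ : ρ.PosDef) (A : 𝕄) :
    Continuous fun u : ℝ => mpow ρ u * A * mpow ρ (1 - u) := by
  have := continuous_mpow hρ
  fun_prop

theorem re_trace_kubo_mul {ρ : 𝕄} (hρ : ρ.PosDef) (A M : 𝕄) :
    (kubo ρ A * M).trace.re = ∫ u in (0:ℝ)..1, (mpow ρ u * A * mpow ρ (1 - u) * M).trace.re :=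
  (intervalIntegral_re_trace_mul (continuous_mpow_mul_mul_mpow_one_sub hρ A) 0 1 M).symm

theorem re_trace_kubo {ρ : 𝕄} (hρ : ρ.PosDef) (A : 𝕄) :
    (kubo ρ A).trace.re = (ρ * A).trace.re := by
  have hcyc (u : ℝ) : (mpow ρ u * A * mpow ρ (1 - u) * 1).trace.re = (ρ * A).trace.re := by
    rw [Matrix.mul_one, Matrix.trace_mul_comm, ← Matrix.mul_assoc, mpow_add hρ, sub_add_cancel,
      mpow_one hρ]
  rw [← Matrix.mul_one (kubo ρ A), re_trace_kubo_mul hρ,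
    intervalIntegral.integral_congr fun u _ => hcyc u]
  simp

theorem kubo_add_smul_one {ρ : 𝕄} (hρ : ρ.PosDef) (A : 𝕄) (c : ℝ) :
    kubo ρ (A + c • 1) = kubo ρ A + c • ρ := by
  have hsplit (u : ℝ) : mpow ρ u * (A + c • 1) * mpow ρ (1 - u)
      = mpow ρ u * A * mpow ρ (1 - u) + c • ρ := by
    rw [Matrix.mul_add, Matrix.add_mul, Matrix.mul_smul, Matrix.mul_one, Matrix.smul_mul,
      mpow_add hρ, add_sub_cancel, mpow_one hρ]
  simp only [kubo, hsplit]
  rw [intervalIntegral.integral_add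
    ((continuous_mpow_mul_mul_mpow_one_sub hρ A).intervalIntegrable 0 1) intervalIntegrable_const]
  simp

theorem hasDerivAt_mexp_one_sub_smul_mlog_add_smul {ρ : 𝕄} (hρ : ρ.PosDef) (σ : 𝕄) :
    HasDerivAt (fun t : ℝ => mexp ((1 - t) • mlog ρ + t • mlog σ))
      (kubo ρ (mlog σ - mlog ρ)) 0 := by
  have hline : (fun t : ℝ => mexp ((1 - t) • mlog ρ + t • mlog σ))
      = fun t => exp (mlog ρ + t • (mlog σ - mlog ρ)) := by
    funext t
    rw [mexp]
    congr 1
    module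
  have hkubo : kubo ρ (mlog σ - mlog ρ)
      = ∫ u in (0:ℝ)..1, exp (u • mlog ρ) * (mlog σ - mlog ρ) * exp ((1 - u) • mlog ρ) := by
    simp only [kubo, mpow_eq_exp hρ]
  rw [hline, hkubo]
  exact hasDerivAt_exp_add_smul _ _

theorem isSelfAdjoint_one_sub_smul_mlog_add_smul_mlog (ρ σ : 𝕄) (t : ℝ) :
    IsSelfAdjoint ((1 - t) • mlog ρ + t • mlog σ) :=
  ((IsSelfAdjoint.all _).smul (isSelfAdjoint_mlog ρ)).add
    ((IsSelfAdjoint.all _).smul (isSelfAdjoint_mlog σ))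

theorem arc_eq_inv_smul [NeZero n] (ρ σ : 𝕄) (t : ℝ) :
    arc ρ σ t = ((mexp ((1 - t) • mlog ρ + t • mlog σ)).trace.re)⁻¹
      • mexp ((1 - t) • mlog ρ + t • mlog σ) := by
  have hpos :=
    Complex.pos_iff.1 (trace_exp_pos (isSelfAdjoint_one_sub_smul_mlog_add_smul_mlog ρ σ t))
  unfold arc alpha mexp
  refine (exp_sub_smul_one _ _).trans ?_
  rw [Real.exp_neg, Real.exp_log hpos.1]
  rfl

theorem trace_arc [NeZero n] (ρ σ : 𝕄) (t : ℝ) : (arc ρ σ t).trace = 1 := by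
  obtain ⟨hre, him⟩ :=
    Complex.pos_iff.1 (trace_exp_pos (isSelfAdjoint_one_sub_smul_mlog_add_smul_mlog ρ σ t))
  rw [arc_eq_inv_smul, Matrix.trace_smul]
  apply Complex.ext <;> simp [mexp, hre.ne', ← him]

theorem mlog_arc (ρ σ : 𝕄) (t : ℝ) :
    mlog (arc ρ σ t) = (1 - t) • mlog ρ + t • mlog σ - alpha ρ σ t • 1 :=
  mlog_exp ((isSelfAdjoint_one_sub_smul_mlog_add_smul_mlog ρ σ t).sub
    ((IsSelfAdjoint.all _).smul (IsSelfAdjoint.one _)))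

theorem relEnt_arc_arc [NeZero n] (ρ σ τ : 𝕄) (s t : ℝ) :
    relEnt (arc ρ σ s) (arc ρ τ t) = alpha ρ τ t - alpha ρ σ s
      + s * (arc ρ σ s * (mlog σ - mlog ρ)).trace.re
      - t * (arc ρ σ s * (mlog τ - mlog ρ)).trace.re := by
  have hlog : mlog (arc ρ σ s) - mlog (arc ρ τ t) = (alpha ρ τ t - alpha ρ σ s) • 1
      + s • (mlog σ - mlog ρ) - t • (mlog τ - mlog ρ) := by
    rw [mlog_arc, mlog_arc]
    module
  rw [relEnt, hlog, Matrix.mul_sub, Matrix.mul_add, Matrix.mul_smul, Matrix.mul_smul,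
    Matrix.mul_smul, Matrix.mul_one, Matrix.trace_sub, Matrix.trace_add, Matrix.trace_smul,
    Matrix.trace_smul, Matrix.trace_smul, trace_arc]
  simp

theorem re_trace_mul_sub_mlog (ρ σ : 𝕄) : (ρ * (mlog σ - mlog ρ)).trace.re = -relEnt ρ σ := by
  rw [relEnt, ← neg_sub, Matrix.mul_neg, Matrix.trace_neg, Complex.neg_re]

theorem re_trace_mul_chart {ρ : 𝕄} (hρ1 : ρ.trace = 1) (σ : 𝕄) :
    (ρ * chart ρ σ).trace.re = 0 := by
  rw [chart, Matrix.mul_add, Matrix.mul_smul, Matrix.mul_one, Matrix.trace_add,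
    Matrix.trace_smul, hρ1, Complex.add_re, re_trace_mul_sub_mlog]
  simp

theorem re_trace_kubo_chart_mul_chart {ρ : 𝕄} (hρ : ρ.PosDef) (hρ1 : ρ.trace = 1) (σ τ : 𝕄) :
    (kubo ρ (chart ρ σ) * chart ρ τ).trace.re
      = (kubo ρ (chart ρ σ) * (mlog τ - mlog ρ)).trace.re := by
  change (kubo ρ (chart ρ σ) * (mlog τ - mlog ρ + relEnt ρ τ • 1)).trace.re = _
  rw [Matrix.mul_add, Matrix.mul_smul, Matrix.mul_one, Matrix.trace_add,
    Matrix.trace_smul, Complex.add_re, Complex.smul_re, re_trace_kubo hρ, re_trace_mul_chart hρ1]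
  simp

theorem differentiableAt_alpha_zero {ρ : 𝕄} (hρ : ρ.PosDef) (hρ1 : ρ.trace = 1) (τ : 𝕄) :
    DifferentiableAt ℝ (alpha ρ τ) 0 := by
  have hZ := (hasDerivAt_mexp_one_sub_smul_mlog_add_smul hρ τ).re_trace_mul 1
  simp only [Matrix.mul_one] at hZ
  refine hZ.differentiableAt.log ?_
  simp [mexp, exp_mlog hρ, hρ1]

theorem hasDerivAt_arc_zero [NeZero n] {ρ : 𝕄} (hρ : ρ.PosDef) (hρ1 : ρ.trace = 1) (σ : 𝕄) :
    HasDerivAt (arc ρ σ) (kubo ρ (chart ρ σ)) 0 := by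
  have hF := hasDerivAt_mexp_one_sub_smul_mlog_add_smul hρ σ
  have hρexp : mexp (mlog ρ) = ρ := exp_mlog hρ
  have hZ := hF.re_trace_mul 1
  simp only [Matrix.mul_one, re_trace_kubo hρ, re_trace_mul_sub_mlog] at hZ
  have hinv := hZ.inv (by simp [hρexp, hρ1])
  rw [funext (arc_eq_inv_smul ρ σ), chart, kubo_add_smul_one hρ]
  refine (hinv.smul hF).congr_deriv ?_
  simp [hρexp, hρ1]

theorem hasDerivAt_relEnt_arc_arc [NeZero n] {ρ : 𝕄} (hρ : ρ.PosDef) (hρ1 : ρ.trace = 1)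
    (σ τ : 𝕄) (s : ℝ) :
    HasDerivAt (fun t => relEnt (arc ρ σ s) (arc ρ τ t))
      (deriv (alpha ρ τ) 0 - (arc ρ σ s * (mlog τ - mlog ρ)).trace.re) 0 := by
  simp only [relEnt_arc_arc]
  have hα := (differentiableAt_alpha_zero hρ hρ1 τ).hasDerivAt
  exact ((hα.sub_const _).add_const _).sub (hasDerivAt_mul_const _)

theorem stmt11_general (n : ℕ) (hn : 1 ≤ n) (ρ σ τ : Matrix (Fin n) (Fin n) ℂ)
    (hρ : ρ.PosDef) (hρ1 : ρ.trace = 1) :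
    (∀ s : ℝ, DifferentiableAt ℝ (fun t => relEnt (arc ρ σ s) (arc ρ τ t)) 0) ∧
    HasDerivAt (fun s : ℝ => deriv (fun t => relEnt (arc ρ σ s) (arc ρ τ t)) 0)
      (-(∫ u in (0:ℝ)..1,
          (Matrix.trace (mpow ρ u * chart ρ σ * mpow ρ (1 - u) * chart ρ τ)).re)) 0 ∧
    (∫ u in (0:ℝ)..1,
        (Matrix.trace (mpow ρ u * chart ρ σ * mpow ρ (1 - u) * chart ρ τ)).re)
      = (Matrix.trace (kubo ρ (chart ρ σ) * chart ρ τ)).re := by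
  have : NeZero n := ⟨by omega⟩
  have hkubo := re_trace_kubo_mul hρ (chart ρ σ) (chart ρ τ)
  have hderiv := hasDerivAt_relEnt_arc_arc hρ hρ1 σ τ
  refine ⟨fun s => (hderiv s).differentiableAt, ?_, hkubo.symm⟩
  rw [← hkubo, re_trace_kubo_chart_mul_chart hρ hρ1, funext fun s => (hderiv s).deriv]
  exact ((hasDerivAt_arc_zero hρ hρ1 σ).re_trace_mul _).const_sub _

/-- the mixed second derivative `-(∂/∂s)(∂/∂t) D(σ_s‖τ_t)` at `s = t = 0`
exists and equals `∫₀¹ Tr(ρ^u c_ρ(σ) ρ^(1-u) c_ρ(τ)) du = Tr([c_ρ(σ)]^K_ρ · c_ρ(τ))`. -/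
theorem stmt11 (n : ℕ) (hn : 1 ≤ n) (ρ σ τ : Matrix (Fin n) (Fin n) ℂ)
    (hρ : ρ.PosDef) (hρ1 : ρ.trace = 1) (hσ : σ.PosDef) (hσ1 : σ.trace = 1)
    (hτ : τ.PosDef) (hτ1 : τ.trace = 1) :
    (∀ s : ℝ, DifferentiableAt ℝ (fun t => relEnt (arc ρ σ s) (arc ρ τ t)) 0) ∧
    HasDerivAt (fun s : ℝ => deriv (fun t => relEnt (arc ρ σ s) (arc ρ τ t)) 0)
      (-(∫ u in (0:ℝ)..1,
          (Matrix.trace (mpow ρ u * chart ρ σ * mpow ρ (1 - u) * chart ρ τ)).re)) 0 ∧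
    (∫ u in (0:ℝ)..1,
        (Matrix.trace (mpow ρ u * chart ρ σ * mpow ρ (1 - u) * chart ρ τ)).re)
      = (Matrix.trace (kubo ρ (chart ρ σ) * chart ρ τ)).re :=
  stmt11_general n hn ρ σ τ hρ hρ1
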